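/- Let X be a Tychonoff space, let 𝒜 ⊆ ℘(X) be an ideal-base all of whose members are closed in X, suppose X is 𝒜-normal, and let ℬ ⊆ ℘(X) be such that every member of ℬ is ℝ-bounded and ⋃ℬ = X. Consider the game 𝔊₁ in which in round n One picks A_n ∈ 𝒜, Two responds with an open set V_n ⊆ X with A_n ⊆ V_n, and Two wins iff some B ∈ ℬ satisfies B ⊆ V_n for at most finitely many n; and the game 𝔊₂ in which in round n One plays a nonempty open subset U_n of C_𝒜(X), Two picks g_n ∈ U_n, and Two wins iff {g_n : n ∈ ω} is a closed discrete subset of C_ℬ(X). Then 𝔊₁ ≤_II 𝔊₂: if Two has a winning Markov strategy (respectively, winning strategy) in 𝔊₁ then Two has one in 𝔊₂, and if One has no winning strategy (respectively, no winning predetermined strategy) in 𝔊₁ then One has none in 𝔊₂. -/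

import Mathlib

/-!
ω-round single selection games, with winning condition given by a predicate `W` on the
sequence of Two's selections (Two wins a run iff `W` holds of it).
-/

/-- One has a winning strategy: `σ` maps Two's previous picks to a member of `𝒜`, and
defeats every compatible sequence of picks by Two. -/
def OneWinsG {β : Type*} (𝒜 : Set (Set β)) (W : (ℕ → β) → Prop) : Prop :=
  ∃ σ : List β → Set β, (∀ l, σ l ∈ 𝒜) ∧
    ∀ x : ℕ → β, (∀ n, x n ∈ σ (List.ofFn fun i : Fin n => x i)) → ¬ W x

/-- One has a winning predetermined strategy (a function of the round number only). -/
def OnePreG {β : Type*} (𝒜 : Set (Set β)) (W : (ℕ → β) → Prop) : Prop :=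
  ∃ p : ℕ → Set β, (∀ n, p n ∈ 𝒜) ∧ ∀ x : ℕ → β, (∀ n, x n ∈ p n) → ¬ W x

/-- Two has a winning strategy: `τ` maps One's previous moves and One's current move to
a selection from the current move, and wins against every legal sequence of moves by One. -/
def TwoWinsG {β : Type*} (𝒜 : Set (Set β)) (W : (ℕ → β) → Prop) : Prop :=
  ∃ τ : List (Set β) → Set β → β, (∀ l A, A ∈ 𝒜 → τ l A ∈ A) ∧
    ∀ A : ℕ → Set β, (∀ n, A n ∈ 𝒜) →
      W fun n => τ (List.ofFn fun i : Fin n => A i) (A n)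

/-- Two has a winning Markov strategy (a function of One's latest move and the round). -/
def TwoMarkovG {β : Type*} (𝒜 : Set (Set β)) (W : (ℕ → β) → Prop) : Prop :=
  ∃ τ : Set β → ℕ → β, (∀ A ∈ 𝒜, ∀ n, τ A n ∈ A) ∧
    ∀ A : ℕ → Set β, (∀ n, A n ∈ 𝒜) → W fun n => τ (A n) n

/-- `G₁(𝒜,W) ≤_II G₁(ℬ,V)`: transfer of winning (Markov) strategies for Two and of
non-existence of winning (predetermined) strategies for One. -/
def LeTwoG {β γ : Type*} (𝒜 : Set (Set β)) (W : (ℕ → β) → Prop)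
    (ℬ : Set (Set γ)) (V : (ℕ → γ) → Prop) : Prop :=
  (TwoMarkovG 𝒜 W → TwoMarkovG ℬ V) ∧ (TwoWinsG 𝒜 W → TwoWinsG ℬ V) ∧
  (¬ OneWinsG 𝒜 W → ¬ OneWinsG ℬ V) ∧ (¬ OnePreG 𝒜 W → ¬ OnePreG ℬ V)

open Set Topology

/-- `𝒜` is an ideal-base: any two members have their union contained in a third member. -/
def IdealBase {X : Type*} (𝒜 : Set (Set X)) : Prop :=
  ∀ A₁ ∈ 𝒜, ∀ A₂ ∈ 𝒜, ∃ A₃ ∈ 𝒜, A₁ ∪ A₂ ⊆ A₃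

variable {X : Type*} [TopologicalSpace X]

/-- The basic set `[f;A,ε] = {g : sup_{x∈A} |f x − g x| < ε}`, the sup condition being
expressed as the existence of a bound `δ < ε`. -/
def fnBall (f : C(X, ℝ)) (A : Set X) (ε : ℝ) : Set C(X, ℝ) :=
  {g | ∃ δ : ℝ, δ < ε ∧ ∀ x ∈ A, |f x - g x| ≤ δ}

/-- The `𝒜`-open topology on `C(X,ℝ)` (i.e. the topology of `C_𝒜(X)`), generated by the
sets `[f;A,ε]` for `f ∈ C(X,ℝ)`, `A ∈ 𝒜`, `ε > 0`. -/
def setOpenTop (𝒜 : Set (Set X)) : TopologicalSpace C(X, ℝ) :=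
  TopologicalSpace.generateFrom
    {S | ∃ f : C(X, ℝ), ∃ A ∈ 𝒜, ∃ ε : ℝ, 0 < ε ∧ S = fnBall f A ε}

/-- The collection `𝒩_{C_𝒜(X)}(𝟎)` of open neighborhoods of the zero function in
`C_𝒜(X)`. -/
def Nbhd0 (𝒜 : Set (Set X)) : Set (Set C(X, ℝ)) :=
  {U | IsOpen[setOpenTop 𝒜] U ∧ (0 : C(X, ℝ)) ∈ U}

/-- `X` is `𝒜`-normal: for every `A ∈ 𝒜` and open `U ⊇ A` there is a continuous
`g : X → [0,1]` with `g ≡ 0` on `A` and `g ≡ 1` off `U`. -/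
def ANormal (𝒜 : Set (Set X)) : Prop :=
  ∀ A ∈ 𝒜, ∀ U : Set X, IsOpen U → A ⊆ U →
    ∃ g : C(X, ℝ), (∀ x, g x ∈ Icc (0 : ℝ) 1) ∧ (∀ x ∈ A, g x = 0) ∧ ∀ x ∉ U, g x = 1

/-- `B ⊆ X` is `ℝ`-bounded: every continuous real-valued function on `X` is bounded
on `B`. -/
def RBounded (B : Set X) : Prop :=
  ∀ f : C(X, ℝ), ∃ M : ℝ, ∀ x ∈ B, |f x| ≤ M

/-- `D` is a closed discrete subset in the topology `t`: `D` is closed and has no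
accumulation point (every point has a neighborhood meeting `D` in at most itself). -/
def ClosedDiscreteIn {Y : Type*} (t : TopologicalSpace Y) (D : Set Y) : Prop :=
  IsClosed[t] D ∧ ∀ y : Y, ∃ U : Set Y, IsOpen[t] U ∧ y ∈ U ∧ U ∩ D ⊆ {y}

/-! Both games are compared through a translation of moves: One's open set `U ∋ f` in
`C_𝒜(X)` contains a ball `[f;A,ε]`, which is translated into the move `A` of `𝔊₁`; Two's
answer `V ⊇ A` there is translated back, via `𝒜`-normality, into a function equal to `f`
on `A` (so it lies in `U`) and equal to the round number `n` off `V`. If some `B ∈ ℬ` lies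
in only finitely many `V_n`, these functions take arbitrarily large values on `B`, and
since every continuous function is bounded on `B`, each ball `[y;B,1]` contains only
finitely many of them; in the T₁ space `C_ℬ(X)` this makes their range closed discrete.
When `𝒜 = ∅` the topology of `C_𝒜(X)` is indiscrete and Two wins `𝔊₂` outright by playing
the constants `n`. -/

section Games

variable {β γ : Type*} {𝒞 : Set (Set β)} {W : (ℕ → β) → Prop}
  {𝒟 : Set (Set γ)} {V : (ℕ → γ) → Prop}

theorem LeTwoG.of_forall_mem (x : ℕ → γ) (hx : ∀ U ∈ 𝒟, ∀ n, x n ∈ U) (hV : V x) :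
    LeTwoG 𝒞 W 𝒟 V := by
  refine ⟨fun _ => ⟨fun _ n => x n, fun U hU n => hx U hU n, fun _ _ => hV⟩,
    fun _ => ⟨fun l _ => x l.length, fun l U hU => hx U hU _, fun _ _ => ?_⟩,
    fun _ ⟨σ, hσ, hwin⟩ => hwin x (fun n => hx _ (hσ _) n) hV,
    fun _ ⟨p, hp, hwin⟩ => hwin x (fun n => hx _ (hp n) n) hV⟩
  simpa only [List.length_ofFn] using hV

/-- `T` translates moves of One in the second game into moves in the first, and `R U b n`
translates Two's answer `b` to `T U` in round `n` back into an answer to `U`. -/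
theorem LeTwoG.of_translation (T : Set γ → Set β) (R : Set γ → β → ℕ → γ)
    (hT : ∀ U ∈ 𝒟, T U ∈ 𝒞) (hR : ∀ U ∈ 𝒟, ∀ b ∈ T U, ∀ n, R U b n ∈ U)
    (hWV : ∀ U : ℕ → Set γ, (∀ n, U n ∈ 𝒟) → ∀ b : ℕ → β, (∀ n, b n ∈ T (U n)) →
      W b → V fun n => R (U n) (b n) n) :
    LeTwoG 𝒞 W 𝒟 V := by
  refine ⟨?markov, ?full, ?one, ?pre⟩
  case markov =>
    rintro ⟨τ, hτ, hwin⟩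
    exact ⟨fun U n => R U (τ (T U) n) n, fun U hU n => hR U hU _ (hτ _ (hT U hU) n) n,
      fun U hU => hWV U hU _ (fun n => hτ _ (hT _ (hU n)) n) (hwin _ fun n => hT _ (hU n))⟩
  case full =>
    rintro ⟨τ, hτ, hwin⟩
    refine ⟨fun l U => R U (τ (l.map T) (T U)) l.length,
      fun l U hU => hR U hU _ (hτ _ _ (hT U hU)) _, fun U hU => ?_⟩
    simpa only [List.map_ofFn, Function.comp_def, List.length_ofFn] using
      hWV U hU _ (fun n => hτ _ _ (hT _ (hU n))) (hwin _ fun n => hT _ (hU n))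
  case one =>
    refine fun hOne ⟨σ, hσ, hwin⟩ => hOne ?_
    -- Two's history in the first game is replayed, one answer at a time, in the second.
    let step : List γ → β → List γ := fun acc b => acc ++ [R (σ acc) b acc.length]
    refine ⟨fun l => T (σ (l.foldl step [])), fun l => hT _ (hσ _), fun b hb hW => ?_⟩
    set c : ℕ → γ := fun n => R (σ ((List.ofFn fun i : Fin n => b i).foldl step [])) (b n) n
    have hfold : ∀ n, (List.ofFn fun i : Fin n => b i).foldl step [] =
        List.ofFn fun i : Fin n => c i := by
      intro n
      induction n with
      | zero => rfl
      | succ n ih =>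
        simp only [List.ofFn_succ', Fin.val_castSucc, Fin.val_last, List.concat_eq_append,
          List.foldl_concat, ih]
        show _ ++ [R _ (b n) _] =
          _ ++ [R (σ ((List.ofFn fun i : Fin n => b i).foldl step [])) (b n) n]
        rw [ih, List.length_ofFn]
    have hc : ∀ n, c n = R (σ (List.ofFn fun i : Fin n => c i)) (b n) n := fun n => by
      rw [← hfold n]
    have hb' : ∀ n, b n ∈ T (σ (List.ofFn fun i : Fin n => c i)) := fun n => hfold n ▸ hb n
    refine hwin c (fun n => hc n ▸ hR _ (hσ _) _ (hb' n) n) ?_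
    rw [funext hc]
    exact hWV _ (fun n => hσ _) b hb' hW
  case pre =>
    refine fun hOne ⟨p, hp, hwin⟩ => hOne ⟨fun n => T (p n), fun n => hT _ (hp n),
      fun b hb hW => hwin _ (fun n => hR _ (hp n) _ (hb n) n) (hWV p hp b hb hW)⟩

end Games

theorem closedDiscreteIn_of_finite_inter {Y : Type*} [TopologicalSpace Y] [T1Space Y]
    {D : Set Y} (h : ∀ y, ∃ U, IsOpen U ∧ y ∈ U ∧ (U ∩ D).Finite) :
    ClosedDiscreteIn ‹_› D := by
  have hsep : ∀ y, ∃ U, IsOpen U ∧ y ∈ U ∧ U ∩ D ⊆ {y} := fun y => by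
    obtain ⟨U, hU, hyU, hfin⟩ := h y
    refine ⟨U \ ((U ∩ D) \ {y}), hU.sdiff (hfin.sdiff.isClosed), ⟨hyU, fun h => h.2 rfl⟩, ?_⟩
    rintro z ⟨⟨hzU, hz⟩, hzD⟩
    by_contra hzy
    exact hz ⟨⟨hzU, hzD⟩, hzy⟩
  refine ⟨isOpen_compl_iff.1 (isOpen_iff_forall_mem_open.2 fun y hy => ?_), hsep⟩
  obtain ⟨U, hU, hyU, hUD⟩ := hsep y
  exact ⟨U, fun z hzU hzD => hy (hUD ⟨hzU, hzD⟩ ▸ hzD), hU, hyU⟩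

theorem finite_setOf_natCast_le (M : ℝ) : {n : ℕ | (n : ℝ) ≤ M}.Finite :=
  (finite_Iic ⌈M⌉₊).subset fun _ hn => Nat.cast_le.1 (hn.trans (Nat.le_ceil M))

theorem mem_fnBall_of_eqOn {f g : C(X, ℝ)} {A : Set X} {ε : ℝ} (hε : 0 < ε)
    (h : EqOn g f A) : g ∈ fnBall f A ε :=
  ⟨0, hε, fun x hx => by simp [h hx]⟩

theorem fnBall_subset_fnBall {f : C(X, ℝ)} {A A' : Set X} {ε ε' : ℝ} (hA : A ⊆ A')
    (hε : ε' ≤ ε) : fnBall f A' ε' ⊆ fnBall f A ε := fun _ ⟨δ, hδ, hb⟩ =>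
  ⟨δ, hδ.trans_le hε, fun x hx => hb x (hA hx)⟩

theorem isOpen_fnBall {𝒜 : Set (Set X)} {f : C(X, ℝ)} {A : Set X} {ε : ℝ} (hA : A ∈ 𝒜)
    (hε : 0 < ε) : IsOpen[setOpenTop 𝒜] (fnBall f A ε) :=
  TopologicalSpace.GenerateOpen.basic _ ⟨f, A, hA, ε, hε, rfl⟩

theorem setOpenTop_empty : setOpenTop (∅ : Set (Set X)) = ⊤ :=
  top_unique <| le_generateFrom fun _ ⟨_, _, hA, _⟩ => hA.elim

theorem exists_fnBall_subset {𝒜 : Set (Set X)} (h𝒜 : IdealBase 𝒜) (hne : 𝒜.Nonempty)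
    {U : Set C(X, ℝ)} (hU : IsOpen[setOpenTop 𝒜] U) {f : C(X, ℝ)} (hf : f ∈ U) :
    ∃ A ∈ 𝒜, ∃ ε > 0, fnBall f A ε ⊆ U := by
  induction hU with
  | basic S hS =>
    obtain ⟨f₀, A, hA, ε, -, rfl⟩ := hS
    obtain ⟨δ, hδ, hb⟩ := hf
    refine ⟨A, hA, ε - δ, by linarith, fun g ⟨δ', hδ', hb'⟩ => ⟨δ + δ', by linarith,
      fun x hx => (abs_sub_le _ _ _).trans (add_le_add (hb x hx) (hb' x hx))⟩⟩
  | univ => exact ⟨hne.some, hne.some_mem, 1, one_pos, subset_univ _⟩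
  | inter U U' _ _ ihU ihU' =>
    obtain ⟨A₁, hA₁, ε₁, hε₁, hs₁⟩ := ihU hf.1
    obtain ⟨A₂, hA₂, ε₂, hε₂, hs₂⟩ := ihU' hf.2
    obtain ⟨A, hA, hsub⟩ := h𝒜 A₁ hA₁ A₂ hA₂
    exact ⟨A, hA, min ε₁ ε₂, lt_min hε₁ hε₂, fun g hg =>
      ⟨hs₁ (fnBall_subset_fnBall (subset_union_left.trans hsub) (min_le_left _ _) hg),
        hs₂ (fnBall_subset_fnBall (subset_union_right.trans hsub) (min_le_right _ _) hg)⟩⟩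
  | sUnion S _ ih =>
    obtain ⟨t, ht, hft⟩ := hf
    obtain ⟨A, hA, ε, hε, hs⟩ := ih t ht hft
    exact ⟨A, hA, ε, hε, hs.trans (subset_sUnion_of_mem ht)⟩

theorem t1Space_setOpenTop {ℬ : Set (Set X)} (hUB : ⋃₀ ℬ = univ) :
    @T1Space C(X, ℝ) (setOpenTop ℬ) := by
  let := setOpenTop ℬ
  refine t1Space_iff_exists_open.2 fun f g hfg => ?_
  obtain ⟨x, hx⟩ := DFunLike.ne_iff.1 hfg
  obtain ⟨B, hB, hxB⟩ := mem_sUnion.1 (hUB ▸ mem_univ x)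
  have hε : 0 < |f x - g x| := abs_pos.2 (sub_ne_zero.2 hx)
  refine ⟨fnBall f B |f x - g x|, isOpen_fnBall hB hε,
    mem_fnBall_of_eqOn hε fun _ _ => rfl, fun ⟨δ, hδ, hb⟩ => (hb x hxB).not_gt hδ⟩

theorem RBounded.finite_fnBall_inter_range {B : Set X} (hB : RBounded B) {g : ℕ → C(X, ℝ)}
    (hg : ∀ M : ℝ, {n | ∀ x ∈ B, g n x ≤ M}.Finite) (y : C(X, ℝ)) :
    (fnBall y B 1 ∩ range g).Finite := by
  obtain ⟨M, hM⟩ := hB y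
  refine ((hg (M + 1)).image g).subset ?_
  rintro _ ⟨⟨δ, hδ, hb⟩, n, rfl⟩
  refine ⟨n, fun x hx => ?_, rfl⟩
  have h₁ := (abs_le.1 (hb x hx)).1
  have h₂ := (abs_le.1 (hM x hx)).2
  linarith

theorem closedDiscreteIn_range_of_forall_finite {ℬ : Set (Set X)} (hUB : ⋃₀ ℬ = univ)
    {B : Set X} (hB : B ∈ ℬ) (hBb : RBounded B) {g : ℕ → C(X, ℝ)}
    (hg : ∀ M : ℝ, {n | ∀ x ∈ B, g n x ≤ M}.Finite) :
    ClosedDiscreteIn (setOpenTop ℬ) (range g) :=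
  @closedDiscreteIn_of_finite_inter _ (setOpenTop ℬ) (t1Space_setOpenTop hUB) _ fun y =>
    ⟨fnBall y B 1, isOpen_fnBall hB one_pos, mem_fnBall_of_eqOn one_pos fun _ _ => rfl,
      hBb.finite_fnBall_inter_range hg y⟩

theorem finite_setOf_forall_le_of_eq_off {B : Set X} {V : ℕ → Set X} {g : ℕ → C(X, ℝ)}
    (hg : ∀ n, ∀ x ∉ V n, g n x = n) (hB : {n | B ⊆ V n}.Finite) (M : ℝ) :
    {n | ∀ x ∈ B, g n x ≤ M}.Finite := by
  refine (hB.union (finite_setOf_natCast_le M)).subset fun n hn => ?_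
  by_cases hBV : B ⊆ V n
  · exact Or.inl hBV
  · obtain ⟨x, hxB, hxV⟩ := not_subset.1 hBV
    exact Or.inr (show (n : ℝ) ≤ M from hg n x hxV ▸ hn x hxB)

theorem closedDiscreteIn_range_const {ℬ : Set (Set X)} (hRb : ∀ B ∈ ℬ, RBounded B)
    (hUB : ⋃₀ ℬ = univ) :
    ClosedDiscreteIn (setOpenTop ℬ) (range fun n : ℕ => ContinuousMap.const X (n : ℝ)) := by
  rcases isEmpty_or_nonempty X with hX | ⟨⟨x⟩⟩
  · let := setOpenTop ℬ
    have := t1Space_setOpenTop hUB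
    exact closedDiscreteIn_of_finite_inter fun _ =>
      ⟨univ, isOpen_univ, mem_univ _, subsingleton_of_subsingleton.finite⟩
  · obtain ⟨B, hB, hxB⟩ := mem_sUnion.1 (hUB ▸ mem_univ x)
    exact closedDiscreteIn_range_of_forall_finite hUB hB (hRb B hB) fun M =>
      (finite_setOf_natCast_le M).subset fun _ hn => hn x hxB

theorem ANormal.exists_eqOn_of_eq_off {𝒜 : Set (Set X)} (hnorm : ANormal 𝒜) {A V : Set X}
    (hA : A ∈ 𝒜) (hV : IsOpen V) (hAV : A ⊆ V) (f : C(X, ℝ)) (c : ℝ) :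
    ∃ g : C(X, ℝ), EqOn g f A ∧ ∀ x ∉ V, g x = c := by
  obtain ⟨h, -, h₀, h₁⟩ := hnorm A hA V hV hAV
  exact ⟨f + h * (ContinuousMap.const X c - f), fun x hx => by simp [h₀ x hx],
    fun x hx => by simp [h₁ x hx]⟩

theorem stmt14_general
    (𝒜 ℬ : Set (Set X)) (hA : IdealBase 𝒜)
    (hnorm : ANormal 𝒜) (hRb : ∀ B ∈ ℬ, RBounded B) (hUB : ⋃₀ ℬ = univ) :
    LeTwoG
      {S : Set (Set X) | ∃ A ∈ 𝒜, S = {V : Set X | IsOpen V ∧ A ⊆ V}}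
      (fun V : ℕ → Set X => ∃ B ∈ ℬ, {n : ℕ | B ⊆ V n}.Finite)
      {U : Set C(X, ℝ) | IsOpen[setOpenTop 𝒜] U ∧ U.Nonempty}
      (fun g : ℕ → C(X, ℝ) =>
        ClosedDiscreteIn (setOpenTop ℬ) (Set.range g)) := by
  rcases 𝒜.eq_empty_or_nonempty with rfl | hne
  · refine LeTwoG.of_forall_mem _ (fun U ⟨hU, hUne⟩ n => ?_)
      (closedDiscreteIn_range_const hRb hUB)
    rw [setOpenTop_empty, TopologicalSpace.isOpen_top_iff] at hU
    rw [hU.resolve_left hUne.ne_empty]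
    trivial
  have hball : ∀ U, IsOpen[setOpenTop 𝒜] U ∧ U.Nonempty →
      ∃ f ∈ U, ∃ A ∈ 𝒜, ∃ ε > 0, fnBall f A ε ⊆ U := fun U hU =>
    ⟨_, hU.2.some_mem, exists_fnBall_subset hA hne hU.1 hU.2.some_mem⟩
  choose! f hfU A hA𝒜 ε hε hball using hball
  choose! R hRf hRn using fun U (hU : IsOpen[setOpenTop 𝒜] U ∧ U.Nonempty) V
    (hV : IsOpen V ∧ A U ⊆ V) (n : ℕ) =>
    hnorm.exists_eqOn_of_eq_off (hA𝒜 U hU) hV.1 hV.2 (f U) n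
  refine LeTwoG.of_translation (fun U => {V | IsOpen V ∧ A U ⊆ V}) R
    (fun U hU => ⟨A U, hA𝒜 U hU, rfl⟩)
    (fun U hU V hV n => hball U hU (mem_fnBall_of_eqOn (hε U hU) (hRf U hU V hV n))) ?_
  rintro U hU V hV ⟨B, hB, hfin⟩
  exact closedDiscreteIn_range_of_forall_finite hUB hB (hRb B hB)
    (finite_setOf_forall_le_of_eq_off (fun n => hRn _ (hU n) _ (hV n) n) hfin)

/-- For a Tychonoff space `X`, an ideal-base `𝒜` of closed sets with `X`
`𝒜`-normal, and `ℬ` consisting of `ℝ`-bounded sets with `⋃ℬ = X`, `𝔊₁ ≤_II 𝔊₂`, where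
in `𝔊₁` One plays `A_n ∈ 𝒜` (identified with the family of open supersets of `A_n`),
Two picks an open `V_n ⊇ A_n`, and Two wins iff some `B ∈ ℬ` satisfies `B ⊆ V_n` for at
most finitely many `n`; and in `𝔊₂` One plays nonempty open subsets of `C_𝒜(X)`, Two
selects a member `g_n`, and Two wins iff `{g_n : n ∈ ω}` is a closed discrete subset of
`C_ℬ(X)`.  (These are `G₁(𝒩[𝒜], ¬Λ(X,ℬ))` and `G₁(𝒯_{C_𝒜(X)}, CD_{C_ℬ(X)})`.) -/
theorem stmt14 [T35Space X]
    (𝒜 ℬ : Set (Set X)) (hA : IdealBase 𝒜) (hAclosed : ∀ A ∈ 𝒜, IsClosed A)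
    (hnorm : ANormal 𝒜) (hRb : ∀ B ∈ ℬ, RBounded B) (hUB : ⋃₀ ℬ = univ) :
    LeTwoG
      {S : Set (Set X) | ∃ A ∈ 𝒜, S = {V : Set X | IsOpen V ∧ A ⊆ V}}
      (fun V : ℕ → Set X => ∃ B ∈ ℬ, {n : ℕ | B ⊆ V n}.Finite)
      {U : Set C(X, ℝ) | IsOpen[setOpenTop 𝒜] U ∧ U.Nonempty}
      (fun g : ℕ → C(X, ℝ) =>
        ClosedDiscreteIn (setOpenTop ℬ) (Set.range g)) :=
  stmt14_general 𝒜 ℬ hA hnorm hRb hUB
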